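/- For all real numbers a > 0 and b > 0, 1-WL-E fails to distinguish the six-point configurations X_L(a,b) = ((0,0,b), (0,0,−b), (a,a,a), (a,a,−a), (−a,−a,a), (−a,−a,−a)) and X_R(a,b) = ((0,0,b), (0,0,−b), (a,a,a), (−a,a,a), (a,−a,−a), (−a,−a,−a)): for every iteration t there is a bijection π : Fin 6 → Fin 6 matching nodes of X_L to nodes of X_R with equal 1-WL-E colors. (This gives a continuous family of counterexamples to the completeness of Vanilla DisGNN, obtained from a cube combined with a regular octahedron of arbitrary relative size.) -/

import Mathlib

/-!
Color refinement never splits the initial partition of each configuration into the two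
octahedron poles and the four cube vertices. In both configurations each pole sees the other
pole at distance `2b` and two cube vertices at each of the distances `√(2a² + (b ∓ a)²)`, and
each cube vertex sees one pole at each of these two distances and the other cube vertices at
distances `2a`, `2√2 a`, `2√3 a`. A coloring with this property is refined by every round of
1-WL-E. Since all coordinates are integer combinations of `a` and `b`, the distance profiles
are compared through the integer coefficients of the squared distances, a finite check.
-/

noncomputable section OneWLE

/-- The position of a node of the disjoint union of the two configurations. -/
def WLpos {n m : ℕ} (x : Fin n → EuclideanSpace ℝ (Fin 3))
    (y : Fin m → EuclideanSpace ℝ (Fin 3)) :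
    Fin n ⊕ Fin m → EuclideanSpace ℝ (Fin 3) :=
  Sum.elim x y

/-- The node set of the side of a node `u` of the disjoint union. -/
def WLside (n m : ℕ) : Fin n ⊕ Fin m → Type
  | Sum.inl _ => Fin n
  | Sum.inr _ => Fin m

/-- Inclusion of a side into the disjoint union. -/
def WLemb {n m : ℕ} : (u : Fin n ⊕ Fin m) → WLside n m u → Fin n ⊕ Fin m
  | Sum.inl _, w => Sum.inl w
  | Sum.inr _, w => Sum.inr w

/-- The 1-WL-E (Vanilla DisGNN color refinement) relations `R_t` on the disjoint union
of two complete distance graphs, with trivial initial colors: `R_0` relates all pairs,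
and `u R_{t+1} v` iff `u R_t v` and there is a bijection `σ` between the side of `u`
and the side of `v` preserving distances to `u` resp. `v` and the relation `R_t`. -/
def WLRel {n m : ℕ} (x : Fin n → EuclideanSpace ℝ (Fin 3))
    (y : Fin m → EuclideanSpace ℝ (Fin 3)) :
    ℕ → (Fin n ⊕ Fin m) → (Fin n ⊕ Fin m) → Prop
  | 0, _, _ => True
  | t + 1, u, v => WLRel x y t u v ∧
      ∃ σ : WLside n m u ≃ WLside n m v, ∀ w : WLside n m u,
        dist (WLpos x y u) (WLpos x y (WLemb u w))
          = dist (WLpos x y v) (WLpos x y (WLemb v (σ w))) ∧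
        WLRel x y t (WLemb u w) (WLemb v (σ w))

end OneWLE

/-- The left configuration `X_L(a,b)`: two opposite vertices of a regular octahedron
together with four coplanar cube vertices (all six points lie on the plane `x = y`). -/
noncomputable def XL (a b : ℝ) : Fin 6 → EuclideanSpace ℝ (Fin 3) :=
  ![!₂[0, 0, b], !₂[0, 0, -b], !₂[a, a, a], !₂[a, a, -a], !₂[-a, -a, a], !₂[-a, -a, -a]]

/-- The right configuration `X_R(a,b)`: two opposite vertices of a regular octahedron
together with four non-coplanar cube vertices. -/
noncomputable def XR (a b : ℝ) : Fin 6 → EuclideanSpace ℝ (Fin 3) :=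
  ![!₂[0, 0, b], !₂[0, 0, -b], !₂[a, a, a], !₂[-a, a, a], !₂[a, -a, -a], !₂[-a, -a, -a]]

open Finset

theorem exists_equiv_forall_eq_of_map_univ_eq {α β γ : Type*} [Fintype α] [Fintype β]
    [DecidableEq γ] {f : α → γ} {g : β → γ} (h : univ.val.map f = univ.val.map g) :
    ∃ σ : α ≃ β, ∀ a, f a = g (σ a) := by
  have hfib : ∀ c, Fintype.card {a // f a = c} = Fintype.card {b // g b = c} := fun c => by
    simpa [Multiset.count_map, Fintype.card_subtype, eq_comm, card_def] using
      congrArg (Multiset.count c) h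
  exact ⟨Equiv.ofFiberEquiv fun c => Fintype.equivOfCardEq (hfib c),
    fun a => (Equiv.ofFiberEquiv_map _ a).symm⟩

def IsStableColoring {P C : Type*} [Dist P] {n m : ℕ} (x : Fin n → P) (y : Fin m → P)
    (c : Fin n → C) (c' : Fin m → C) : Prop :=
  ∀ i j, c i = c' j → ∃ σ : Fin n ≃ Fin m,
    ∀ w, dist (x i) (x w) = dist (y j) (y (σ w)) ∧ c w = c' (σ w)

theorem IsStableColoring.wlRel {C : Type*} {n m : ℕ} {x : Fin n → EuclideanSpace ℝ (Fin 3)}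
    {y : Fin m → EuclideanSpace ℝ (Fin 3)} {c : Fin n → C} {c' : Fin m → C}
    (h : IsStableColoring x y c c') (t : ℕ) :
    ∀ i j, c i = c' j → WLRel x y t (Sum.inl i) (Sum.inr j) := by
  induction t with
  | zero => exact fun _ _ _ => trivial
  | succ t ih =>
    intro i j hij
    obtain ⟨σ, hσ⟩ := h i j hij
    exact ⟨ih i j hij, σ, fun w => ⟨(hσ w).1, ih w (σ w) (hσ w).2⟩⟩

section Lattice

variable {ι : Type*} {n m : ℕ}

def latticeConfig (a b : ℝ) (U V : Fin n → ι → ℤ) : Fin n → EuclideanSpace ℝ ι :=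
  fun i => WithLp.toLp 2 fun k => a * U i k + b * V i k

variable [Fintype ι]

def sqDistCoeffs (U V : Fin n → ι → ℤ) (i j : Fin n) : ℤ × ℤ × ℤ :=
  (∑ k, (U i k - U j k) ^ 2, ∑ k, (U i k - U j k) * (V i k - V j k), ∑ k, (V i k - V j k) ^ 2)

theorem dist_latticeConfig_sq (a b : ℝ) (U V : Fin n → ι → ℤ) (i j : Fin n) :
    dist (latticeConfig a b U V i) (latticeConfig a b U V j) ^ 2 =
      a ^ 2 * (sqDistCoeffs U V i j).1 + 2 * a * b * (sqDistCoeffs U V i j).2.1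
        + b ^ 2 * (sqDistCoeffs U V i j).2.2 := by
  rw [EuclideanSpace.dist_eq, Real.sq_sqrt (by positivity)]
  simp only [latticeConfig, sqDistCoeffs, Real.dist_eq, sq_abs]
  push_cast
  simp only [mul_sum, ← sum_add_distrib]
  exact sum_congr rfl fun k _ => by ring

theorem dist_latticeConfig_eq_of_sqDistCoeffs_eq (a b : ℝ) {U V : Fin n → ι → ℤ}
    {U' V' : Fin m → ι → ℤ} {i j : Fin n} {i' j' : Fin m}
    (h : sqDistCoeffs U V i j = sqDistCoeffs U' V' i' j') :
    dist (latticeConfig a b U V i) (latticeConfig a b U V j)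
      = dist (latticeConfig a b U' V' i') (latticeConfig a b U' V' j') := by
  rw [← pow_left_inj₀ dist_nonneg dist_nonneg two_ne_zero, dist_latticeConfig_sq,
    dist_latticeConfig_sq, h]

theorem isStableColoring_latticeConfig {C : Type*} [DecidableEq C] (a b : ℝ)
    {U V : Fin n → ι → ℤ} {U' V' : Fin m → ι → ℤ} {c : Fin n → C} {c' : Fin m → C}
    (h : ∀ i j, c i = c' j → univ.val.map (fun w => (sqDistCoeffs U V i w, c w))
      = univ.val.map (fun w => (sqDistCoeffs U' V' j w, c' w))) :
    IsStableColoring (latticeConfig a b U V) (latticeConfig a b U' V') c c' := by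
  intro i j hij
  obtain ⟨σ, hσ⟩ := exists_equiv_forall_eq_of_map_univ_eq (h i j hij)
  exact ⟨σ, fun w => ⟨dist_latticeConfig_eq_of_sqDistCoeffs_eq a b (Prod.ext_iff.1 (hσ w)).1,
    (Prod.ext_iff.1 (hσ w)).2⟩⟩

end Lattice

def cubeL : Fin 6 → Fin 3 → ℤ := ![0, 0, ![1, 1, 1], ![1, 1, -1], ![-1, -1, 1], ![-1, -1, -1]]

def cubeR : Fin 6 → Fin 3 → ℤ := ![0, 0, ![1, 1, 1], ![-1, 1, 1], ![1, -1, -1], ![-1, -1, -1]]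

def poles : Fin 6 → Fin 3 → ℤ := ![![0, 0, 1], ![0, 0, -1], 0, 0, 0, 0]

def isPole (i : Fin 6) : Bool := i < 2

theorem XL_eq_latticeConfig (a b : ℝ) : XL a b = latticeConfig a b cubeL poles := by
  funext i; fin_cases i <;> ext k <;> fin_cases k <;> simp [XL, latticeConfig, cubeL, poles]

theorem XR_eq_latticeConfig (a b : ℝ) : XR a b = latticeConfig a b cubeR poles := by
  funext i; fin_cases i <;> ext k <;> fin_cases k <;> simp [XR, latticeConfig, cubeR, poles]

theorem map_sqDistCoeffs_cubeL_eq_cubeR : ∀ i j : Fin 6, isPole i = isPole j →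
    univ.val.map (fun w => (sqDistCoeffs cubeL poles i w, isPole w))
      = univ.val.map (fun w => (sqDistCoeffs cubeR poles j w, isPole w)) := by
  decide

theorem wl_fails_to_distinguish_XL_XR_general (a b : ℝ) :
    ∀ t : ℕ, ∃ π : Fin 6 ≃ Fin 6, ∀ i : Fin 6,
      WLRel (XL a b) (XR a b) t (Sum.inl i) (Sum.inr (π i)) := by
  intro t
  rw [XL_eq_latticeConfig, XR_eq_latticeConfig]
  exact ⟨Equiv.refl _, fun i =>
    (isStableColoring_latticeConfig a b map_sqDistCoeffs_cubeL_eq_cubeR).wlRel t i i rfl⟩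

/-- For all `a, b > 0`, 1-WL-E fails to distinguish `X_L(a,b)` and
`X_R(a,b)`: at every iteration `t` there is a bijection matching the nodes of
`X_L(a,b)` to nodes of `X_R(a,b)` with equal 1-WL-E colors. -/
theorem wl_fails_to_distinguish_XL_XR (a b : ℝ) (ha : 0 < a) (hb : 0 < b) :
    ∀ t : ℕ, ∃ π : Fin 6 ≃ Fin 6, ∀ i : Fin 6,
      WLRel (XL a b) (XR a b) t (Sum.inl i) (Sum.inr (π i)) :=
  wl_fails_to_distinguish_XL_XR_general a b
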